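/- Let μ ≠ 0, ε = ±1. The metric g on ℝ³ with components g₁₁ = (ε/μ)(e^{−2μx₃} − 1), g₁₂ = 1, g₁₃ = μx₂, g₃₃ = 1 is not Einstein: there is no real constant c and no point-independent validity of ρ_{ij} = c·g_{ij}, where ρ is the Ricci tensor ρ₁₁ = −½εμ(3e^{−2μx₃} − 1), ρ₁₂ = −½μ², ρ₁₃ = −½μ³x₂, ρ₂₂ = ρ₂₃ = 0, ρ₃₃ = −½μ². In fact ρ_{ij} = c·g_{ij} fails at every point even pointwise: there exists no function c(x) making ρ = c·g hold identically on ℝ³. -/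

import Mathlib

/-- A point of `ℝ³`. -/
abbrev Pt := Fin 3 → ℝ

/-- The matrix of the metric `g` at a point `p = (x₁,x₂,x₃)`. -/
noncomputable def gMat (μ ε : ℝ) (p : Pt) : Matrix (Fin 3) (Fin 3) ℝ :=
  ![![(ε/μ) * (Real.exp (-(2*μ*p 2)) - 1), 1, μ * p 1],
    ![1, 0, 0],
    ![μ * p 1, 0, 1]]

/-- The Ricci tensor of `g`. -/
noncomputable def RicciExp (μ ε : ℝ) (p : Pt) : Matrix (Fin 3) (Fin 3) ℝ :=
  ![![-(1/2) * ε * μ * (3 * Real.exp (-(2*μ*p 2)) - 1), -(1/2) * μ^2, -(1/2) * μ^3 * p 1],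
    ![-(1/2) * μ^2, 0, 0],
    ![-(1/2) * μ^3 * p 1, 0, -(1/2) * μ^2]]

/-!
On the plane `x₃ = 0` the component `g₁₁` vanishes while `ρ₁₁ = -εμ` does not,
so `ρ₁₁ = c · g₁₁` fails there for every value of `c`.
-/

lemma gMat_zero_zero_of_apply_two_eq_zero (μ ε : ℝ) {p : Pt} (hp : p 2 = 0) :
    gMat μ ε p 0 0 = 0 := by
  simp [gMat, hp]

lemma RicciExp_zero_zero_of_apply_two_eq_zero (μ ε : ℝ) {p : Pt} (hp : p 2 = 0) :
    RicciExp μ ε p 0 0 = -(ε * μ) := by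
  simp only [RicciExp, hp, Matrix.cons_val_zero, mul_zero, neg_zero, Real.exp_zero]
  ring

lemma RicciExp_ne_smul_gMat_of_apply_two_eq_zero {μ ε : ℝ} (hμ : μ ≠ 0) (hε : ε ≠ 0)
    {p : Pt} (hp : p 2 = 0) (c : ℝ) : RicciExp μ ε p ≠ c • gMat μ ε p := by
  intro h
  have h00 := congrFun (congrFun h 0) 0
  rw [Matrix.smul_apply, RicciExp_zero_zero_of_apply_two_eq_zero μ ε hp,
    gMat_zero_zero_of_apply_two_eq_zero μ ε hp, smul_zero, neg_eq_zero] at h00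
  exact mul_ne_zero hε hμ h00

/-- The metric `g` is not Einstein: there is no function `c : ℝ³ → ℝ` (in particular, no
constant) with `ρ_{ij} = c·g_{ij}` identically on `ℝ³`. -/
theorem not_einstein (μ ε : ℝ) (hμ : μ ≠ 0) (hε : ε = 1 ∨ ε = -1) :
    ¬ ∃ c : Pt → ℝ, ∀ (p : Pt) (i j : Fin 3), RicciExp μ ε p i j = c p * gMat μ ε p i j := by
  rintro ⟨c, h⟩
  have hε₀ : ε ≠ 0 := by rcases hε with rfl | rfl <;> norm_num
  exact RicciExp_ne_smul_gMat_of_apply_two_eq_zero hμ hε₀ (p := 0) rfl (c 0)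
    (Matrix.ext fun i j => h 0 i j)
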